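/- Let m ∈ ℝ, a ∈ ℝ³, α ∈ (0,1/2), and R > |m|/2, set U(x) := 1 + m/(2|x|) on E_R, and let u : E_R → ℝ be smooth with u(x) = 1 − 1/|x| + (m + ⟨a, x/|x|⟩)/(2|x|²) + O₂(|x|^{−3+α}). Define v := U^{−2}·|∇u| on E_R. Then v(x) = 1/|x|² − (2m + ⟨a, x/|x|⟩)/|x|³ + O(|x|^{−4+α}) as |x| → ∞. -/

import Mathlib

noncomputable section

open scoped RealInnerProductSpace

abbrev E3 : Type := EuclideanSpace ℝ (Fin 3)

/-- Hessian of `u` at `x`, viewed as a continuous linear map `v ↦ D²u(x)·v`. -/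
noncomputable def hess (u : E3 → ℝ) (x : E3) : E3 →L[ℝ] E3 :=
  fderiv ℝ (gradient u) x

/-- `f = O(|x|^{-β})` as `|x| → ∞`. -/
def IsBigOAtInfty (f : E3 → ℝ) (β : ℝ) : Prop :=
  ∃ C r : ℝ, ∀ x : E3, r ≤ ‖x‖ → |f x| ≤ C * ‖x‖ ^ (-β)

/-- `f = O₂(|x|^{-β})` as `|x| → ∞`: the function, its gradient, and its Hessian decay
at the rates `|x|^{-β}`, `|x|^{-β-1}`, `|x|^{-β-2}` respectively. -/
def IsBigO2AtInfty (f : E3 → ℝ) (β : ℝ) : Prop :=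
  ∃ C r : ℝ, ∀ x : E3, r ≤ ‖x‖ →
    |f x| ≤ C * ‖x‖ ^ (-β) ∧ ‖gradient f x‖ ≤ C * ‖x‖ ^ (-β - 1) ∧
      ‖hess f x‖ ≤ C * ‖x‖ ^ (-β - 2)

lemma hasFDerivAt_norm' (x : E3) (hx : x ≠ 0) :
    HasFDerivAt (fun y : E3 => ‖y‖) (‖x‖⁻¹ • innerSL ℝ x) x := by
  have h1 : HasFDerivAt (fun y : E3 => ‖y‖ ^ 2) (2 • (innerSL ℝ x)) x :=
    (hasStrictFDerivAt_norm_sq x).hasFDerivAt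
  have h2 : HasDerivAt Real.sqrt (1 / (2 * Real.sqrt (‖x‖^2))) (‖x‖^2) :=
    Real.hasDerivAt_sqrt (pow_ne_zero _ (norm_ne_zero_iff.mpr hx))
  have h3 := h2.comp_hasFDerivAt x h1
  have he : (Real.sqrt ∘ fun y : E3 => ‖y‖^2) = fun y : E3 => ‖y‖ := by
    funext y; simp [Function.comp, Real.sqrt_sq (norm_nonneg y)]
  rw [he] at h3
  refine h3.congr_fderiv ?_
  rw [Real.sqrt_sq (norm_nonneg x)]
  ext y
  simp [two_smul]
  have : ‖x‖ ≠ 0 := norm_ne_zero_iff.mpr hx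
  field_simp
  ring


lemma hasGradientAt_w (m : ℝ) (a x : E3) (hx : x ≠ 0) :
    HasGradientAt (fun y : E3 => 1 - 1/‖y‖ + (m + ⟪a,y⟫/‖y‖)/(2*‖y‖^2))
      ((1/‖x‖^3 - m/‖x‖^4 - 3*⟪a,x⟫/(2*‖x‖^5)) • x + (1/(2*‖x‖^3)) • a) x := by
  have hrne : ‖x‖ ≠ 0 := norm_ne_zero_iff.mpr hx
  have hr := hasFDerivAt_norm' x hx
  have hs : HasFDerivAt (fun y : E3 => ⟪a,y⟫) (innerSL ℝ a) x := (innerSL ℝ a).hasFDerivAt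
  have hinv1 : HasFDerivAt (fun y : E3 => ‖y‖⁻¹)
      ((-(‖x‖^2)⁻¹) • (‖x‖⁻¹ • innerSL ℝ x)) x :=
    (hasDerivAt_inv hrne).comp_hasFDerivAt x hr
  have hsq : HasFDerivAt (fun y : E3 => ‖y‖^2) (2 • (innerSL ℝ x)) x :=
    (hasStrictFDerivAt_norm_sq x).hasFDerivAt
  have hden := hsq.const_mul (2:ℝ)
  have hdne : (2:ℝ) * ‖x‖^2 ≠ 0 := by positivity
  have hinv2 : HasFDerivAt (fun y : E3 => (2*‖y‖^2)⁻¹)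
      ((-((2*‖x‖^2)^2)⁻¹) • ((2:ℝ) • (2 • (innerSL ℝ x)))) x :=
    (hasDerivAt_inv hdne).comp_hasFDerivAt x hden
  have hnum := (hasFDerivAt_const m x).add (hs.mul hinv1)
  have hbig := ((hasFDerivAt_const (1:ℝ) x).sub hinv1).add (hnum.mul hinv2)
  rw [hasGradientAt_iff_hasFDerivAt]
  have heq : (fun y : E3 => 1 - 1/‖y‖ + (m + ⟪a,y⟫/‖y‖)/(2*‖y‖^2))
      = fun y : E3 => (1 - ‖y‖⁻¹) + (m + ⟪a,y⟫ * ‖y‖⁻¹) * (2*‖y‖^2)⁻¹ := by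
    funext y; rw [div_eq_mul_inv, div_eq_mul_inv, div_eq_mul_inv, one_mul]
  rw [heq]
  refine hbig.congr_fderiv ?_
  ext y
  simp [InnerProductSpace.toDual_apply_apply, inner_add_left, real_inner_smul_left]
  field_simp
  ring

lemma term_bd (c mA s A r : ℝ) (i j n : ℕ) (hr : 1 ≤ r) (hA : 0 ≤ A) (hs : |s| ≤ A * r)
    (hn : 6 + j ≤ n) :
    |c * mA ^ i * s ^ j / r ^ n| ≤ |c| * |mA| ^ i * A ^ j / r ^ 6 := by
  have hr0 : (0:ℝ) < r := lt_of_lt_of_le one_pos hr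
  rw [abs_div, abs_mul, abs_mul, abs_pow, abs_pow, abs_pow, abs_of_pos hr0]
  rw [div_le_div_iff₀ (by positivity) (by positivity)]
  calc |c| * |mA|^i * |s|^j * r^6 ≤ |c| * |mA|^i * (A*r)^j * r^6 := by gcongr
    _ = |c| * |mA|^i * A^j * r^(j+6) := by rw [mul_pow, pow_add]; ring
    _ ≤ |c| * |mA|^i * A^j * r^n := by
        gcongr
        · omega

def K1 (m A : ℝ) : ℝ := (1/4) * A ^ 2 * A ^ 0 + (1/4) * |m| ^ 0 * A ^ 2 + 2 * |m| ^ 1 * A ^ 1 + 2 * |m| ^ 1 * A ^ 2 + (7/2) * |m| ^ 2 * A ^ 0 + 5 * |m| ^ 2 * A ^ 1 + (3/2) * |m| ^ 2 * A ^ 2 + (5/2) * |m| ^ 3 * A ^ 0 + 5 * |m| ^ 3 * A ^ 1 + (1/2) * |m| ^ 3 * A ^ 2 + (65/16) * |m| ^ 4 * A ^ 0 + (15/8) * |m| ^ 4 * A ^ 1 + (1/16) * |m| ^ 4 * A ^ 2 + (7/4) * |m| ^ 5 * A ^ 0 + (1/4) * |m| ^ 5 * A ^ 1 + (1/4) * |m|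 ^ 6 * A ^ 0

set_option maxHeartbeats 2000000 in
lemma key_poly_bound (m A r s : ℝ) (hr : 1 ≤ r) (hA : 0 ≤ A) (hs : |s| ≤ A * r) :
    |((1/r^3 - m/r^4 - 3*s/(2*r^5))^2*r^2 + 2*(1/r^3 - m/r^4 - 3*s/(2*r^5))*(1/(2*r^3))*s
        + (1/(2*r^3))^2*A^2)
      - ((1 + m/(2*r))^2 * (1/r^2 - (2*m + s/r)/r^3))^2| ≤ K1 m A / r^6 := by
  have hr0 : (0:ℝ) < r := lt_of_lt_of_le one_pos hr
  have hrne : r ≠ 0 := ne_of_gt hr0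
  have hP : ((1/r^3 - m/r^4 - 3*s/(2*r^5))^2*r^2 + 2*(1/r^3 - m/r^4 - 3*s/(2*r^5))*(1/(2*r^3))*s
        + (1/(2*r^3))^2*A^2)
      - ((1 + m/(2*r))^2 * (1/r^2 - (2*m + s/r)/r^3))^2 = (1/4) * A ^ 2 * s ^ 0 / r ^ 6 + (-1/4) * m ^ 0 * s ^ 2 / r ^ 8 + 2 * m ^ 1 * s ^ 1 / r ^ 7 + -2 * m ^ 1 * s ^ 2 / r ^ 9 + (7/2) * m ^ 2 * s ^ 0 / r ^ 6 + -5 * m ^ 2 * s ^ 1 / r ^ 8 + (-3/2) * m ^ 2 * s ^ 2 / r ^ 10 + (-5/2) * m ^ 3 * s ^ 0 / r ^ 7 + -5 * m ^ 3 * s ^ 1 / r ^ 9 + (-1/2) * m ^ 3 * s ^ 2 / r ^ 11 + (-65/16) * m ^ 4 * s ^ 0 / r ^ 8 + (-15/8) * m ^ 4 * s ^ 1 / r ^ 10 + (-1/16) * m ^ 4 * s ^ 2 / r ^ 12 + (-7/4) * m ^ 5 * s ^ 0 / r ^ 9 + (-1/4) * m ^ 5 * s ^ 1 / r ^ 11 +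 (-1/4) * m ^ 6 * s ^ 0 / r ^ 10 := by
    field_simp
    ring
  have hK : (1/4) * |A| ^ 2 * A ^ 0 / r ^ 6 + (1/4) * |m| ^ 0 * A ^ 2 / r ^ 6 + 2 * |m| ^ 1 * A ^ 1 / r ^ 6 + 2 * |m| ^ 1 * A ^ 2 / r ^ 6 + (7/2) * |m| ^ 2 * A ^ 0 / r ^ 6 + 5 * |m| ^ 2 * A ^ 1 / r ^ 6 + (3/2) * |m| ^ 2 * A ^ 2 / r ^ 6 + (5/2) * |m| ^ 3 * A ^ 0 / r ^ 6 + 5 * |m| ^ 3 * A ^ 1 / r ^ 6 + (1/2) * |m| ^ 3 * A ^ 2 / r ^ 6 + (65/16) * |m| ^ 4 * A ^ 0 / r ^ 6 + (15/8) * |m| ^ 4 * A ^ 1 / r ^ 6 + (1/16) * |m| ^ 4 * A ^ 2 / r ^ 6 + (7/4) * |m| ^ 5 * A ^ 0 / r ^ 6 + (1/4) * |m| ^ 5 * A ^ 1 / r ^ 6 + (1/4) * |m| ^ 6 * A ^ 0 / r ^ 6 = K1 m A / r ^ 6 := by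
    rw [K1, abs_of_nonneg hA]; ring
  have h1 : |(1/4) * A ^ 2 * s ^ 0 / r ^ 6| ≤ (1/4) * |A| ^ 2 * A ^ 0 / r ^ 6 := by
    have h := term_bd ((1/4)) A s A r 2 0 6 hr hA hs (by norm_num)
    calc |(1/4) * A ^ 2 * s ^ 0 / r ^ 6| ≤ |(1/4)| * |A| ^ 2 * A ^ 0 / r ^ 6 := h
      _ = (1/4) * |A| ^ 2 * A ^ 0 / r ^ 6 := by rw [show |((1/4):ℝ)| = (1/4) by norm_num]
  have h2 : |(-1/4) * m ^ 0 * s ^ 2 / r ^ 8| ≤ (1/4) * |m| ^ 0 * A ^ 2 / r ^ 6 := by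
    have h := term_bd ((-1/4)) m s A r 0 2 8 hr hA hs (by norm_num)
    calc |(-1/4) * m ^ 0 * s ^ 2 / r ^ 8| ≤ |(-1/4)| * |m| ^ 0 * A ^ 2 / r ^ 6 := h
      _ = (1/4) * |m| ^ 0 * A ^ 2 / r ^ 6 := by rw [show |((-1/4):ℝ)| = (1/4) by norm_num]
  have h3 : |2 * m ^ 1 * s ^ 1 / r ^ 7| ≤ 2 * |m| ^ 1 * A ^ 1 / r ^ 6 := by
    have h := term_bd (2) m s A r 1 1 7 hr hA hs (by norm_num)
    calc |2 * m ^ 1 * s ^ 1 / r ^ 7| ≤ |2| * |m| ^ 1 * A ^ 1 / r ^ 6 := h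
      _ = 2 * |m| ^ 1 * A ^ 1 / r ^ 6 := by rw [show |(2:ℝ)| = 2 by norm_num]
  have h4 : |-2 * m ^ 1 * s ^ 2 / r ^ 9| ≤ 2 * |m| ^ 1 * A ^ 2 / r ^ 6 := by
    have h := term_bd (-2) m s A r 1 2 9 hr hA hs (by norm_num)
    calc |-2 * m ^ 1 * s ^ 2 / r ^ 9| ≤ |-2| * |m| ^ 1 * A ^ 2 / r ^ 6 := h
      _ = 2 * |m| ^ 1 * A ^ 2 / r ^ 6 := by rw [show |(-2:ℝ)| = 2 by norm_num]
  have h5 : |(7/2) * m ^ 2 * s ^ 0 / r ^ 6| ≤ (7/2) * |m| ^ 2 * A ^ 0 / r ^ 6 := by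
    have h := term_bd ((7/2)) m s A r 2 0 6 hr hA hs (by norm_num)
    calc |(7/2) * m ^ 2 * s ^ 0 / r ^ 6| ≤ |(7/2)| * |m| ^ 2 * A ^ 0 / r ^ 6 := h
      _ = (7/2) * |m| ^ 2 * A ^ 0 / r ^ 6 := by rw [show |((7/2):ℝ)| = (7/2) by norm_num]
  have h6 : |-5 * m ^ 2 * s ^ 1 / r ^ 8| ≤ 5 * |m| ^ 2 * A ^ 1 / r ^ 6 := by
    have h := term_bd (-5) m s A r 2 1 8 hr hA hs (by norm_num)
    calc |-5 * m ^ 2 * s ^ 1 / r ^ 8| ≤ |-5| * |m| ^ 2 * A ^ 1 / r ^ 6 := h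
      _ = 5 * |m| ^ 2 * A ^ 1 / r ^ 6 := by rw [show |(-5:ℝ)| = 5 by norm_num]
  have h7 : |(-3/2) * m ^ 2 * s ^ 2 / r ^ 10| ≤ (3/2) * |m| ^ 2 * A ^ 2 / r ^ 6 := by
    have h := term_bd ((-3/2)) m s A r 2 2 10 hr hA hs (by norm_num)
    calc |(-3/2) * m ^ 2 * s ^ 2 / r ^ 10| ≤ |(-3/2)| * |m| ^ 2 * A ^ 2 / r ^ 6 := h
      _ = (3/2) * |m| ^ 2 * A ^ 2 / r ^ 6 := by rw [show |((-3/2):ℝ)| = (3/2) by norm_num]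
  have h8 : |(-5/2) * m ^ 3 * s ^ 0 / r ^ 7| ≤ (5/2) * |m| ^ 3 * A ^ 0 / r ^ 6 := by
    have h := term_bd ((-5/2)) m s A r 3 0 7 hr hA hs (by norm_num)
    calc |(-5/2) * m ^ 3 * s ^ 0 / r ^ 7| ≤ |(-5/2)| * |m| ^ 3 * A ^ 0 / r ^ 6 := h
      _ = (5/2) * |m| ^ 3 * A ^ 0 / r ^ 6 := by rw [show |((-5/2):ℝ)| = (5/2) by norm_num]
  have h9 : |-5 * m ^ 3 * s ^ 1 / r ^ 9| ≤ 5 * |m| ^ 3 * A ^ 1 / r ^ 6 := by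
    have h := term_bd (-5) m s A r 3 1 9 hr hA hs (by norm_num)
    calc |-5 * m ^ 3 * s ^ 1 / r ^ 9| ≤ |-5| * |m| ^ 3 * A ^ 1 / r ^ 6 := h
      _ = 5 * |m| ^ 3 * A ^ 1 / r ^ 6 := by rw [show |(-5:ℝ)| = 5 by norm_num]
  have h10 : |(-1/2) * m ^ 3 * s ^ 2 / r ^ 11| ≤ (1/2) * |m| ^ 3 * A ^ 2 / r ^ 6 := by
    have h := term_bd ((-1/2)) m s A r 3 2 11 hr hA hs (by norm_num)
    calc |(-1/2) * m ^ 3 * s ^ 2 / r ^ 11| ≤ |(-1/2)| * |m| ^ 3 * A ^ 2 / r ^ 6 := h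
      _ = (1/2) * |m| ^ 3 * A ^ 2 / r ^ 6 := by rw [show |((-1/2):ℝ)| = (1/2) by norm_num]
  have h11 : |(-65/16) * m ^ 4 * s ^ 0 / r ^ 8| ≤ (65/16) * |m| ^ 4 * A ^ 0 / r ^ 6 := by
    have h := term_bd ((-65/16)) m s A r 4 0 8 hr hA hs (by norm_num)
    calc |(-65/16) * m ^ 4 * s ^ 0 / r ^ 8| ≤ |(-65/16)| * |m| ^ 4 * A ^ 0 / r ^ 6 := h
      _ = (65/16) * |m| ^ 4 * A ^ 0 / r ^ 6 := by rw [show |((-65/16):ℝ)| = (65/16) by norm_num]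
  have h12 : |(-15/8) * m ^ 4 * s ^ 1 / r ^ 10| ≤ (15/8) * |m| ^ 4 * A ^ 1 / r ^ 6 := by
    have h := term_bd ((-15/8)) m s A r 4 1 10 hr hA hs (by norm_num)
    calc |(-15/8) * m ^ 4 * s ^ 1 / r ^ 10| ≤ |(-15/8)| * |m| ^ 4 * A ^ 1 / r ^ 6 := h
      _ = (15/8) * |m| ^ 4 * A ^ 1 / r ^ 6 := by rw [show |((-15/8):ℝ)| = (15/8) by norm_num]
  have h13 : |(-1/16) * m ^ 4 * s ^ 2 / r ^ 12| ≤ (1/16) * |m| ^ 4 * A ^ 2 / r ^ 6 := by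
    have h := term_bd ((-1/16)) m s A r 4 2 12 hr hA hs (by norm_num)
    calc |(-1/16) * m ^ 4 * s ^ 2 / r ^ 12| ≤ |(-1/16)| * |m| ^ 4 * A ^ 2 / r ^ 6 := h
      _ = (1/16) * |m| ^ 4 * A ^ 2 / r ^ 6 := by rw [show |((-1/16):ℝ)| = (1/16) by norm_num]
  have h14 : |(-7/4) * m ^ 5 * s ^ 0 / r ^ 9| ≤ (7/4) * |m| ^ 5 * A ^ 0 / r ^ 6 := by
    have h := term_bd ((-7/4)) m s A r 5 0 9 hr hA hs (by norm_num)
    calc |(-7/4) * m ^ 5 * s ^ 0 / r ^ 9| ≤ |(-7/4)| * |m| ^ 5 * A ^ 0 / r ^ 6 := h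
      _ = (7/4) * |m| ^ 5 * A ^ 0 / r ^ 6 := by rw [show |((-7/4):ℝ)| = (7/4) by norm_num]
  have h15 : |(-1/4) * m ^ 5 * s ^ 1 / r ^ 11| ≤ (1/4) * |m| ^ 5 * A ^ 1 / r ^ 6 := by
    have h := term_bd ((-1/4)) m s A r 5 1 11 hr hA hs (by norm_num)
    calc |(-1/4) * m ^ 5 * s ^ 1 / r ^ 11| ≤ |(-1/4)| * |m| ^ 5 * A ^ 1 / r ^ 6 := h
      _ = (1/4) * |m| ^ 5 * A ^ 1 / r ^ 6 := by rw [show |((-1/4):ℝ)| = (1/4) by norm_num]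
  have h16 : |(-1/4) * m ^ 6 * s ^ 0 / r ^ 10| ≤ (1/4) * |m| ^ 6 * A ^ 0 / r ^ 6 := by
    have h := term_bd ((-1/4)) m s A r 6 0 10 hr hA hs (by norm_num)
    calc |(-1/4) * m ^ 6 * s ^ 0 / r ^ 10| ≤ |(-1/4)| * |m| ^ 6 * A ^ 0 / r ^ 6 := h
      _ = (1/4) * |m| ^ 6 * A ^ 0 / r ^ 6 := by rw [show |((-1/4):ℝ)| = (1/4) by norm_num]
  have ha2 : |(1/4) * A ^ 2 * s ^ 0 / r ^ 6 + (-1/4) * m ^ 0 * s ^ 2 / r ^ 8| ≤ |(1/4) * A ^ 2 * s ^ 0 / r ^ 6| + |(-1/4) * m ^ 0 * s ^ 2 / r ^ 8| := abs_add_le _ _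
  have ha3 : |(1/4) * A ^ 2 * s ^ 0 / r ^ 6 + (-1/4) * m ^ 0 * s ^ 2 / r ^ 8 + 2 * m ^ 1 * s ^ 1 / r ^ 7| ≤ |(1/4) * A ^ 2 * s ^ 0 / r ^ 6 + (-1/4) * m ^ 0 * s ^ 2 / r ^ 8| + |2 * m ^ 1 * s ^ 1 / r ^ 7| := abs_add_le _ _
  have ha4 : |(1/4) * A ^ 2 * s ^ 0 / r ^ 6 + (-1/4) * m ^ 0 * s ^ 2 / r ^ 8 + 2 * m ^ 1 * s ^ 1 / r ^ 7 + -2 * m ^ 1 * s ^ 2 / r ^ 9| ≤ |(1/4) * A ^ 2 * s ^ 0 / r ^ 6 + (-1/4) * m ^ 0 * s ^ 2 / r ^ 8 + 2 * m ^ 1 * s ^ 1 / r ^ 7| + |-2 * m ^ 1 * s ^ 2 / r ^ 9| := abs_add_le _ _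
  have ha5 : |(1/4) * A ^ 2 * s ^ 0 / r ^ 6 + (-1/4) * m ^ 0 * s ^ 2 / r ^ 8 + 2 * m ^ 1 * s ^ 1 / r ^ 7 + -2 * m ^ 1 * s ^ 2 / r ^ 9 + (7/2) * m ^ 2 * s ^ 0 / r ^ 6| ≤ |(1/4) * A ^ 2 * s ^ 0 / r ^ 6 + (-1/4) * m ^ 0 * s ^ 2 / r ^ 8 + 2 * m ^ 1 * s ^ 1 / r ^ 7 + -2 * m ^ 1 * s ^ 2 / r ^ 9| + |(7/2) * m ^ 2 * s ^ 0 / r ^ 6| := abs_add_le _ _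
  have ha6 : |(1/4) * A ^ 2 * s ^ 0 / r ^ 6 + (-1/4) * m ^ 0 * s ^ 2 / r ^ 8 + 2 * m ^ 1 * s ^ 1 / r ^ 7 + -2 * m ^ 1 * s ^ 2 / r ^ 9 + (7/2) * m ^ 2 * s ^ 0 / r ^ 6 + -5 * m ^ 2 * s ^ 1 / r ^ 8| ≤ |(1/4) * A ^ 2 * s ^ 0 / r ^ 6 + (-1/4) * m ^ 0 * s ^ 2 / r ^ 8 + 2 * m ^ 1 * s ^ 1 / r ^ 7 + -2 * m ^ 1 * s ^ 2 / r ^ 9 + (7/2) * m ^ 2 * s ^ 0 / r ^ 6| + |-5 * m ^ 2 * s ^ 1 / r ^ 8| := abs_add_le _ _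
  have ha7 : |(1/4) * A ^ 2 * s ^ 0 / r ^ 6 + (-1/4) * m ^ 0 * s ^ 2 / r ^ 8 + 2 * m ^ 1 * s ^ 1 / r ^ 7 + -2 * m ^ 1 * s ^ 2 / r ^ 9 + (7/2) * m ^ 2 * s ^ 0 / r ^ 6 + -5 * m ^ 2 * s ^ 1 / r ^ 8 + (-3/2) * m ^ 2 * s ^ 2 / r ^ 10| ≤ |(1/4) * A ^ 2 * s ^ 0 / r ^ 6 + (-1/4) * m ^ 0 * s ^ 2 / r ^ 8 + 2 * m ^ 1 * s ^ 1 / r ^ 7 + -2 * m ^ 1 * s ^ 2 / r ^ 9 + (7/2) * m ^ 2 * s ^ 0 / r ^ 6 + -5 * m ^ 2 * s ^ 1 / r ^ 8| + |(-3/2) * m ^ 2 * s ^ 2 / r ^ 10| := abs_add_le _ _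
  have ha8 : |(1/4) * A ^ 2 * s ^ 0 / r ^ 6 + (-1/4) * m ^ 0 * s ^ 2 / r ^ 8 + 2 * m ^ 1 * s ^ 1 / r ^ 7 + -2 * m ^ 1 * s ^ 2 / r ^ 9 + (7/2) * m ^ 2 * s ^ 0 / r ^ 6 + -5 * m ^ 2 * s ^ 1 / r ^ 8 + (-3/2) * m ^ 2 * s ^ 2 / r ^ 10 + (-5/2) * m ^ 3 * s ^ 0 / r ^ 7| ≤ |(1/4) * A ^ 2 * s ^ 0 / r ^ 6 + (-1/4) * m ^ 0 * s ^ 2 / r ^ 8 + 2 * m ^ 1 * s ^ 1 / r ^ 7 + -2 * m ^ 1 * s ^ 2 / r ^ 9 + (7/2) * m ^ 2 * s ^ 0 / r ^ 6 + -5 * m ^ 2 * s ^ 1 / r ^ 8 + (-3/2) * m ^ 2 * s ^ 2 / r ^ 10| + |(-5/2) * m ^ 3 * s ^ 0 / r ^ 7| := abs_add_le _ _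
  have ha9 : |(1/4) * A ^ 2 * s ^ 0 / r ^ 6 + (-1/4) * m ^ 0 * s ^ 2 / r ^ 8 + 2 * m ^ 1 * s ^ 1 / r ^ 7 + -2 * m ^ 1 * s ^ 2 / r ^ 9 + (7/2) * m ^ 2 * s ^ 0 / r ^ 6 + -5 * m ^ 2 * s ^ 1 / r ^ 8 + (-3/2) * m ^ 2 * s ^ 2 / r ^ 10 + (-5/2) * m ^ 3 * s ^ 0 / r ^ 7 + -5 * m ^ 3 * s ^ 1 / r ^ 9| ≤ |(1/4) * A ^ 2 * s ^ 0 / r ^ 6 + (-1/4) * m ^ 0 * s ^ 2 / r ^ 8 + 2 * m ^ 1 * s ^ 1 / r ^ 7 + -2 * m ^ 1 * s ^ 2 / r ^ 9 + (7/2) * m ^ 2 * s ^ 0 / r ^ 6 + -5 * m ^ 2 * s ^ 1 / r ^ 8 + (-3/2) * m ^ 2 * s ^ 2 / r ^ 10 + (-5/2) * m ^ 3 * s ^ 0 / r ^ 7| + |-5 * m ^ 3 * s ^ 1 / r ^ 9| := abs_add_le _ _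
  have ha10 : |(1/4) * A ^ 2 * s ^ 0 / r ^ 6 + (-1/4) * m ^ 0 * s ^ 2 / r ^ 8 + 2 * m ^ 1 * s ^ 1 / r ^ 7 + -2 * m ^ 1 * s ^ 2 / r ^ 9 + (7/2) * m ^ 2 * s ^ 0 / r ^ 6 + -5 * m ^ 2 * s ^ 1 / r ^ 8 + (-3/2) * m ^ 2 * s ^ 2 / r ^ 10 + (-5/2) * m ^ 3 * s ^ 0 / r ^ 7 + -5 * m ^ 3 * s ^ 1 / r ^ 9 + (-1/2) * m ^ 3 * s ^ 2 / r ^ 11| ≤ |(1/4) * A ^ 2 * s ^ 0 / r ^ 6 + (-1/4) * m ^ 0 * s ^ 2 / r ^ 8 + 2 * m ^ 1 * s ^ 1 / r ^ 7 + -2 * m ^ 1 * s ^ 2 / r ^ 9 + (7/2) * m ^ 2 * s ^ 0 / r ^ 6 + -5 * m ^ 2 * s ^ 1 / r ^ 8 + (-3/2) * m ^ 2 * s ^ 2 / r ^ 10 + (-5/2) * m ^ 3 * s ^ 0 / r ^ 7 + -5 * m ^ 3 * s ^ 1 / r ^ 9| + |(-1/2) * m ^ 3 * s ^ 2 / r ^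 11| := abs_add_le _ _
  have ha11 : |(1/4) * A ^ 2 * s ^ 0 / r ^ 6 + (-1/4) * m ^ 0 * s ^ 2 / r ^ 8 + 2 * m ^ 1 * s ^ 1 / r ^ 7 + -2 * m ^ 1 * s ^ 2 / r ^ 9 + (7/2) * m ^ 2 * s ^ 0 / r ^ 6 + -5 * m ^ 2 * s ^ 1 / r ^ 8 + (-3/2) * m ^ 2 * s ^ 2 / r ^ 10 + (-5/2) * m ^ 3 * s ^ 0 / r ^ 7 + -5 * m ^ 3 * s ^ 1 / r ^ 9 + (-1/2) * m ^ 3 * s ^ 2 / r ^ 11 + (-65/16) * m ^ 4 * s ^ 0 / r ^ 8| ≤ |(1/4) * A ^ 2 * s ^ 0 / r ^ 6 + (-1/4) * m ^ 0 * s ^ 2 / r ^ 8 + 2 * m ^ 1 * s ^ 1 / r ^ 7 + -2 * m ^ 1 * s ^ 2 / r ^ 9 + (7/2) * m ^ 2 * s ^ 0 / r ^ 6 + -5 * m ^ 2 * s ^ 1 / r ^ 8 + (-3/2) * m ^ 2 * s ^ 2 / r ^ 10 + (-5/2) * m ^ 3 * s ^ 0 / r ^ 7 + -5 * m ^ 3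 * s ^ 1 / r ^ 9 + (-1/2) * m ^ 3 * s ^ 2 / r ^ 11| + |(-65/16) * m ^ 4 * s ^ 0 / r ^ 8| := abs_add_le _ _
  have ha12 : |(1/4) * A ^ 2 * s ^ 0 / r ^ 6 + (-1/4) * m ^ 0 * s ^ 2 / r ^ 8 + 2 * m ^ 1 * s ^ 1 / r ^ 7 + -2 * m ^ 1 * s ^ 2 / r ^ 9 + (7/2) * m ^ 2 * s ^ 0 / r ^ 6 + -5 * m ^ 2 * s ^ 1 / r ^ 8 + (-3/2) * m ^ 2 * s ^ 2 / r ^ 10 + (-5/2) * m ^ 3 * s ^ 0 / r ^ 7 + -5 * m ^ 3 * s ^ 1 / r ^ 9 + (-1/2) * m ^ 3 * s ^ 2 / r ^ 11 + (-65/16) * m ^ 4 * s ^ 0 / r ^ 8 + (-15/8) * m ^ 4 * s ^ 1 / r ^ 10| ≤ |(1/4) * A ^ 2 * s ^ 0 / r ^ 6 + (-1/4) * m ^ 0 * s ^ 2 / r ^ 8 + 2 * m ^ 1 * s ^ 1 / r ^ 7 + -2 * m ^ 1 * s ^ 2 / r ^ 9 + (7/2) * m ^ 2 * s ^ 0 /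 r ^ 6 + -5 * m ^ 2 * s ^ 1 / r ^ 8 + (-3/2) * m ^ 2 * s ^ 2 / r ^ 10 + (-5/2) * m ^ 3 * s ^ 0 / r ^ 7 + -5 * m ^ 3 * s ^ 1 / r ^ 9 + (-1/2) * m ^ 3 * s ^ 2 / r ^ 11 + (-65/16) * m ^ 4 * s ^ 0 / r ^ 8| + |(-15/8) * m ^ 4 * s ^ 1 / r ^ 10| := abs_add_le _ _
  have ha13 : |(1/4) * A ^ 2 * s ^ 0 / r ^ 6 + (-1/4) * m ^ 0 * s ^ 2 / r ^ 8 + 2 * m ^ 1 * s ^ 1 / r ^ 7 + -2 * m ^ 1 * s ^ 2 / r ^ 9 + (7/2) * m ^ 2 * s ^ 0 / r ^ 6 + -5 * m ^ 2 * s ^ 1 / r ^ 8 + (-3/2) * m ^ 2 * s ^ 2 / r ^ 10 + (-5/2) * m ^ 3 * s ^ 0 / r ^ 7 + -5 * m ^ 3 * s ^ 1 / r ^ 9 + (-1/2) * m ^ 3 * s ^ 2 / r ^ 11 + (-65/16) * m ^ 4 * s ^ 0 / r ^ 8 + (-15/8) * m ^ 4 * s ^ 1 / r ^ 10 + (-1/16)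 * m ^ 4 * s ^ 2 / r ^ 12| ≤ |(1/4) * A ^ 2 * s ^ 0 / r ^ 6 + (-1/4) * m ^ 0 * s ^ 2 / r ^ 8 + 2 * m ^ 1 * s ^ 1 / r ^ 7 + -2 * m ^ 1 * s ^ 2 / r ^ 9 + (7/2) * m ^ 2 * s ^ 0 / r ^ 6 + -5 * m ^ 2 * s ^ 1 / r ^ 8 + (-3/2) * m ^ 2 * s ^ 2 / r ^ 10 + (-5/2) * m ^ 3 * s ^ 0 / r ^ 7 + -5 * m ^ 3 * s ^ 1 / r ^ 9 + (-1/2) * m ^ 3 * s ^ 2 / r ^ 11 + (-65/16) * m ^ 4 * s ^ 0 / r ^ 8 + (-15/8) * m ^ 4 * s ^ 1 / r ^ 10| + |(-1/16) * m ^ 4 * s ^ 2 / r ^ 12| := abs_add_le _ _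
  have ha14 : |(1/4) * A ^ 2 * s ^ 0 / r ^ 6 + (-1/4) * m ^ 0 * s ^ 2 / r ^ 8 + 2 * m ^ 1 * s ^ 1 / r ^ 7 + -2 * m ^ 1 * s ^ 2 / r ^ 9 + (7/2) * m ^ 2 * s ^ 0 / r ^ 6 + -5 * m ^ 2 * s ^ 1 / r ^ 8 + (-3/2) * m ^ 2 * s ^ 2 / r ^ 10 + (-5/2) * m ^ 3 * s ^ 0 / r ^ 7 + -5 * m ^ 3 * s ^ 1 / r ^ 9 + (-1/2) * m ^ 3 * s ^ 2 / r ^ 11 + (-65/16) * m ^ 4 * s ^ 0 / r ^ 8 + (-15/8) * m ^ 4 * s ^ 1 / r ^ 10 + (-1/16) * m ^ 4 * s ^ 2 / r ^ 12 + (-7/4) * m ^ 5 * s ^ 0 / r ^ 9| ≤ |(1/4) * A ^ 2 * s ^ 0 / r ^ 6 + (-1/4) * m ^ 0 * s ^ 2 / r ^ 8 + 2 * m ^ 1 * s ^ 1 / r ^ 7 + -2 * m ^ 1 * s ^ 2 / r ^ 9 + (7/2) * m ^ 2 * s ^ 0 / r ^ 6 + -5 * m ^ 2 * s ^ 1 /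 r ^ 8 + (-3/2) * m ^ 2 * s ^ 2 / r ^ 10 + (-5/2) * m ^ 3 * s ^ 0 / r ^ 7 + -5 * m ^ 3 * s ^ 1 / r ^ 9 + (-1/2) * m ^ 3 * s ^ 2 / r ^ 11 + (-65/16) * m ^ 4 * s ^ 0 / r ^ 8 + (-15/8) * m ^ 4 * s ^ 1 / r ^ 10 + (-1/16) * m ^ 4 * s ^ 2 / r ^ 12| + |(-7/4) * m ^ 5 * s ^ 0 / r ^ 9| := abs_add_le _ _
  have ha15 : |(1/4) * A ^ 2 * s ^ 0 / r ^ 6 + (-1/4) * m ^ 0 * s ^ 2 / r ^ 8 + 2 * m ^ 1 * s ^ 1 / r ^ 7 + -2 * m ^ 1 * s ^ 2 / r ^ 9 + (7/2) * m ^ 2 * s ^ 0 / r ^ 6 + -5 * m ^ 2 * s ^ 1 / r ^ 8 + (-3/2) * m ^ 2 * s ^ 2 / r ^ 10 + (-5/2) * m ^ 3 * s ^ 0 / r ^ 7 + -5 * m ^ 3 * s ^ 1 / r ^ 9 + (-1/2) * m ^ 3 * s ^ 2 / r ^ 11 + (-65/16) * m ^ 4 * s ^ 0 / r ^ 8 +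 (-15/8) * m ^ 4 * s ^ 1 / r ^ 10 + (-1/16) * m ^ 4 * s ^ 2 / r ^ 12 + (-7/4) * m ^ 5 * s ^ 0 / r ^ 9 + (-1/4) * m ^ 5 * s ^ 1 / r ^ 11| ≤ |(1/4) * A ^ 2 * s ^ 0 / r ^ 6 + (-1/4) * m ^ 0 * s ^ 2 / r ^ 8 + 2 * m ^ 1 * s ^ 1 / r ^ 7 + -2 * m ^ 1 * s ^ 2 / r ^ 9 + (7/2) * m ^ 2 * s ^ 0 / r ^ 6 + -5 * m ^ 2 * s ^ 1 / r ^ 8 + (-3/2) * m ^ 2 * s ^ 2 / r ^ 10 + (-5/2) * m ^ 3 * s ^ 0 / r ^ 7 + -5 * m ^ 3 * s ^ 1 / r ^ 9 + (-1/2) * m ^ 3 * s ^ 2 / r ^ 11 + (-65/16) * m ^ 4 * s ^ 0 / r ^ 8 + (-15/8) * m ^ 4 * s ^ 1 / r ^ 10 + (-1/16) * m ^ 4 * s ^ 2 / r ^ 12 + (-7/4) * m ^ 5 * s ^ 0 / r ^ 9| + |(-1/4) * m ^ 5 * s ^ 1 / r ^ 11| := abs_add_le _ _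
  have ha16 : |(1/4) * A ^ 2 * s ^ 0 / r ^ 6 + (-1/4) * m ^ 0 * s ^ 2 / r ^ 8 + 2 * m ^ 1 * s ^ 1 / r ^ 7 + -2 * m ^ 1 * s ^ 2 / r ^ 9 + (7/2) * m ^ 2 * s ^ 0 / r ^ 6 + -5 * m ^ 2 * s ^ 1 / r ^ 8 + (-3/2) * m ^ 2 * s ^ 2 / r ^ 10 + (-5/2) * m ^ 3 * s ^ 0 / r ^ 7 + -5 * m ^ 3 * s ^ 1 / r ^ 9 + (-1/2) * m ^ 3 * s ^ 2 / r ^ 11 + (-65/16) * m ^ 4 * s ^ 0 / r ^ 8 + (-15/8) * m ^ 4 * s ^ 1 / r ^ 10 + (-1/16) * m ^ 4 * s ^ 2 / r ^ 12 + (-7/4) * m ^ 5 * s ^ 0 / r ^ 9 + (-1/4) * m ^ 5 * s ^ 1 / r ^ 11 + (-1/4) * m ^ 6 * s ^ 0 / r ^ 10| ≤ |(1/4) * A ^ 2 * s ^ 0 / r ^ 6 + (-1/4) * m ^ 0 * s ^ 2 / r ^ 8 + 2 * m ^ 1 * s ^ 1 / r ^ 7 + -2 * m ^ 1 * s ^ 2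 / r ^ 9 + (7/2) * m ^ 2 * s ^ 0 / r ^ 6 + -5 * m ^ 2 * s ^ 1 / r ^ 8 + (-3/2) * m ^ 2 * s ^ 2 / r ^ 10 + (-5/2) * m ^ 3 * s ^ 0 / r ^ 7 + -5 * m ^ 3 * s ^ 1 / r ^ 9 + (-1/2) * m ^ 3 * s ^ 2 / r ^ 11 + (-65/16) * m ^ 4 * s ^ 0 / r ^ 8 + (-15/8) * m ^ 4 * s ^ 1 / r ^ 10 + (-1/16) * m ^ 4 * s ^ 2 / r ^ 12 + (-7/4) * m ^ 5 * s ^ 0 / r ^ 9 + (-1/4) * m ^ 5 * s ^ 1 / r ^ 11| + |(-1/4) * m ^ 6 * s ^ 0 / r ^ 10| := abs_add_le _ _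
  rw [hP]
  linarith

lemma norm_G_sq (c d : ℝ) (x a : E3) :
    ‖c • x + d • a‖^2 = c^2*‖x‖^2 + 2*c*d*⟪a,x⟫ + d^2*‖a‖^2 := by
  rw [norm_add_sq_real, norm_smul, norm_smul, real_inner_smul_left, real_inner_smul_right,
    mul_pow, mul_pow]
  rw [real_inner_comm a x]
  simp [sq_abs]
  ring


set_option maxHeartbeats 1000000 in
/-- If `u(x) = 1 - 1/|x| + (m + ⟨a,x/|x|⟩)/(2|x|²) + O₂(|x|^{-3+α})`,
then the Schwarzschild gradient length `v = U^{-2}|∇u|` satisfies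
`v(x) = 1/|x|² - (2m + ⟨a,x/|x|⟩)/|x|³ + O(|x|^{-4+α})`. -/
theorem schwarzschild_gradient_expansion (m α R : ℝ) (a : E3)
    (hα : α ∈ Set.Ioo (0 : ℝ) (1 / 2)) (hR : |m| / 2 < R)
    (U : E3 → ℝ) (hU : ∀ x : E3, U x = 1 + m / (2 * ‖x‖))
    (u : E3 → ℝ)
    (hu : ContDiffOn ℝ (⊤ : ℕ∞) u {x : E3 | R < ‖x‖})
    (hexp : IsBigO2AtInfty
      (fun x => u x - (1 - 1 / ‖x‖ + (m + ⟪a, x⟫ / ‖x‖) / (2 * ‖x‖ ^ 2)))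
      (3 - α))
    (v : E3 → ℝ) (hv : ∀ x : E3, v x = ‖gradient u x‖ / U x ^ 2) :
    IsBigOAtInfty
      (fun x => v x - (1 / ‖x‖ ^ 2 - (2 * m + ⟪a, x⟫ / ‖x‖) / ‖x‖ ^ 3))
      (4 - α) := by
  obtain ⟨hα0, hα2⟩ := hα
  obtain ⟨C, r₀, hC⟩ := hexp
  refine ⟨4*C + 32*K1 m ‖a‖, max (max r₀ (R+1)) (4*|m| + 2*‖a‖ + 2), ?_⟩
  intro x hx
  have hr₀ : r₀ ≤ ‖x‖ := le_trans (le_trans (le_max_left _ _) (le_max_left _ _)) hx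
  have hR1 : R + 1 ≤ ‖x‖ := le_trans (le_trans (le_max_right _ _) (le_max_left _ _)) hx
  have hbig : 4*|m| + 2*‖a‖ + 2 ≤ ‖x‖ := le_trans (le_max_right _ _) hx
  have hr1 : 1 ≤ ‖x‖ := by
    have := abs_nonneg m; have := norm_nonneg a; linarith
  have hr0 : (0:ℝ) < ‖x‖ := lt_of_lt_of_le one_pos hr1
  have hrne : ‖x‖ ≠ 0 := ne_of_gt hr0
  have hx0 : x ≠ 0 := norm_ne_zero_iff.mp hrne
  have hRlt : R < ‖x‖ := by linarith
  have hs : |⟪a,x⟫| ≤ ‖a‖ * ‖x‖ := abs_real_inner_le_norm a x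
  -- gradient decomposition
  have hw := hasGradientAt_w m a x hx0
  have hud : DifferentiableAt ℝ u x :=
    (hu.contDiffAt ((isOpen_lt continuous_const continuous_norm).mem_nhds hRlt)).differentiableAt
      (by simp)
  have hfd : DifferentiableAt ℝ
      (fun y : E3 => u y - (1 - 1 / ‖y‖ + (m + ⟪a, y⟫ / ‖y‖) / (2 * ‖y‖ ^ 2))) x :=
    hud.sub hw.differentiableAt
  have hgu : gradient u x
      = gradient (fun y : E3 => u y - (1 - 1 / ‖y‖ + (m + ⟪a, y⟫ / ‖y‖) / (2 * ‖y‖ ^ 2))) x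
        + ((1/‖x‖^3 - m/‖x‖^4 - 3*⟪a,x⟫/(2*‖x‖^5)) • x + (1/(2*‖x‖^3)) • a) := by
    have hsum : HasGradientAt u
        (gradient (fun y : E3 => u y - (1 - 1 / ‖y‖ + (m + ⟪a, y⟫ / ‖y‖) / (2 * ‖y‖ ^ 2))) x
          + ((1/‖x‖^3 - m/‖x‖^4 - 3*⟪a,x⟫/(2*‖x‖^5)) • x + (1/(2*‖x‖^3)) • a)) x := by
      rw [hasGradientAt_iff_hasFDerivAt, map_add]
      have h2 := hfd.hasGradientAt.hasFDerivAt.add hw.hasFDerivAt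
      have heq : (fun y : E3 =>
          (u y - (1 - 1 / ‖y‖ + (m + ⟪a, y⟫ / ‖y‖) / (2 * ‖y‖ ^ 2)))
            + (1 - 1 / ‖y‖ + (m + ⟪a, y⟫ / ‖y‖) / (2 * ‖y‖ ^ 2))) = u := by
        funext y; ring
      simp only [Pi.add_def] at h2
      rw [heq] at h2
      exact h2
    exact hsum.gradient
  -- bound on the error gradient
  have hgrad_bd :
      ‖gradient (fun y : E3 => u y - (1 - 1 / ‖y‖ + (m + ⟪a, y⟫ / ‖y‖) / (2 * ‖y‖ ^ 2))) x‖
        ≤ C * ‖x‖ ^ (α - 4) := by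
    have h := (hC x hr₀).2.1
    rwa [show -(3 - α) - 1 = α - 4 by ring] at h
  -- norms and scalars
  set G : E3 := (1/‖x‖^3 - m/‖x‖^4 - 3*⟪a,x⟫/(2*‖x‖^5)) • x + (1/(2*‖x‖^3)) • a with hGdef
  have hN2 : ‖G‖^2 = (1/‖x‖^3 - m/‖x‖^4 - 3*⟪a,x⟫/(2*‖x‖^5))^2*‖x‖^2
      + 2*(1/‖x‖^3 - m/‖x‖^4 - 3*⟪a,x⟫/(2*‖x‖^5))*(1/(2*‖x‖^3))*⟪a,x⟫
      + (1/(2*‖x‖^3))^2*‖a‖^2 := norm_G_sq _ _ x a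
  have key := key_poly_bound m ‖a‖ ‖x‖ ⟪a,x⟫ hr1 (norm_nonneg a) hs
  rw [← hN2] at key
  set B : ℝ := (1 + m/(2*‖x‖))^2 * (1/‖x‖^2 - (2*m + ⟪a,x⟫/‖x‖)/‖x‖^3) with hBdef
  -- lower bounds
  have hK1 : 0 ≤ K1 m ‖a‖ := by unfold K1; positivity
  have hUlow : -(1/8 : ℝ) ≤ m/(2*‖x‖) := by
    rw [le_div_iff₀ (by positivity)]
    nlinarith [abs_nonneg m, neg_abs_le m, norm_nonneg a]
  have hUpos : (0:ℝ) < 1 + m/(2*‖x‖) := by linarith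
  have hU2 : (1:ℝ)/4 ≤ (1 + m/(2*‖x‖))^2 := by nlinarith
  have hq2 : ⟪a,x⟫/‖x‖ ≤ ‖a‖ := by
    rw [div_le_iff₀ hr0]; nlinarith [le_abs_self ⟪a,x⟫]
  have hq1 : -‖a‖ ≤ ⟪a,x⟫/‖x‖ := by
    rw [le_div_iff₀ hr0]; nlinarith [neg_abs_le ⟪a,x⟫]
  have hT : 1/(2*‖x‖^2) ≤ 1/‖x‖^2 - (2*m + ⟪a,x⟫/‖x‖)/‖x‖^3 := by
    have h2 : 2*m + ⟪a,x⟫/‖x‖ ≤ ‖x‖/2 := by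
      have := le_abs_self m; have := norm_nonneg a; linarith
    have h3 : (2*m + ⟪a,x⟫/‖x‖)/‖x‖^3 ≤ (‖x‖/2)/‖x‖^3 := by gcongr
    have h4 : (‖x‖/2)/‖x‖^3 = 1/(2*‖x‖^2) := by field_simp
    have h5 : (1:ℝ)/‖x‖^2 - 1/(2*‖x‖^2) = 1/(2*‖x‖^2) := by field_simp; ring
    linarith
  have hBl : 1/(8*‖x‖^2) ≤ B := by
    rw [hBdef]
    calc 1/(8*‖x‖^2) = (1/4)*(1/(2*‖x‖^2)) := by ring
      _ ≤ (1 + m/(2*‖x‖))^2 * (1/‖x‖^2 - (2*m + ⟪a,x⟫/‖x‖)/‖x‖^3) :=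
          mul_le_mul hU2 hT (by positivity) (by positivity)
  have hBpos : 0 < B := lt_of_lt_of_le (by positivity) hBl
  have hNB : |‖G‖ - B| ≤ 8 * K1 m ‖a‖ / ‖x‖^4 := by
    have hsum_pos : 0 < ‖G‖ + B := by positivity
    have hfac : |‖G‖ - B| * (‖G‖ + B) = |‖G‖^2 - B^2| := by
      rw [← abs_of_pos hsum_pos, ← abs_mul]; ring_nf
    have h5 : |‖G‖ - B| * (1/(8*‖x‖^2)) ≤ K1 m ‖a‖ / ‖x‖^6 := by
      calc |‖G‖ - B| * (1/(8*‖x‖^2)) ≤ |‖G‖ - B| * (‖G‖ + B) := by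
            have h0 : (1:ℝ)/(8*‖x‖^2) ≤ ‖G‖ + B := le_trans hBl (by
              have := norm_nonneg G; linarith)
            exact mul_le_mul_of_nonneg_left h0 (abs_nonneg _)
        _ = |‖G‖^2 - B^2| := hfac
        _ ≤ K1 m ‖a‖ / ‖x‖^6 := key
    have h6 : |‖G‖ - B| = (|‖G‖ - B| * (1/(8*‖x‖^2))) * (8*‖x‖^2) := by field_simp
    rw [h6]
    calc (|‖G‖ - B| * (1/(8*‖x‖^2))) * (8*‖x‖^2)
        ≤ (K1 m ‖a‖/‖x‖^6) * (8*‖x‖^2) := mul_le_mul_of_nonneg_right h5 (by positivity)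
      _ = 8 * K1 m ‖a‖/‖x‖^4 := by field_simp
  have ht1 : |‖gradient u x‖ - ‖G‖| ≤ C * ‖x‖ ^ (α - 4) := by
    refine le_trans (abs_norm_sub_norm_le _ _) ?_
    rw [hgu]
    simpa using hgrad_bd
  have hrp : (1:ℝ)/‖x‖^4 ≤ ‖x‖ ^ (α - 4) := by
    have h7 : ‖x‖ ^ ((-4):ℝ) ≤ ‖x‖ ^ (α - 4) := Real.rpow_le_rpow_of_exponent_le hr1 (by linarith)
    have h8 : ‖x‖ ^ ((-4):ℝ) = 1/‖x‖^4 := by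
      rw [Real.rpow_neg hr0.le, show ((4:ℝ)) = ((4:ℕ):ℝ) by norm_num, Real.rpow_natCast]
      exact (one_div _).symm
    linarith
  have hvT : v x - (1/‖x‖^2 - (2*m + ⟪a,x⟫/‖x‖)/‖x‖^3)
      = (‖gradient u x‖ - B)/((1 + m/(2*‖x‖))^2) := by
    have hU2pos : (0:ℝ) < (1 + m/(2*‖x‖))^2 := pow_pos hUpos 2
    rw [hBdef, hv x, hU x, sub_div, mul_div_cancel_left₀ _ (ne_of_gt hU2pos)]
  have habs2 : |‖gradient u x‖ - B| ≤ C * ‖x‖ ^ (α - 4) + 8 * K1 m ‖a‖/‖x‖^4 := by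
    have := abs_sub_le ‖gradient u x‖ ‖G‖ B
    linarith
  have hfin : |v x - (1/‖x‖^2 - (2*m + ⟪a,x⟫/‖x‖)/‖x‖^3)|
      ≤ (4*C + 32*K1 m ‖a‖) * ‖x‖ ^ (-(4-α)) := by
    rw [show -(4-α) = α - 4 by ring]
    have hU2pos : (0:ℝ) < (1 + m/(2*‖x‖))^2 := pow_pos hUpos 2
    rw [hvT, abs_div, abs_of_pos hU2pos]
    have step1 : |‖gradient u x‖ - B| / (1 + m/(2*‖x‖))^2 ≤ |‖gradient u x‖ - B| * 4 := by
      rw [div_le_iff₀ hU2pos]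
      nlinarith [abs_nonneg (‖gradient u x‖ - B)]
    have step2 : 8 * K1 m ‖a‖/‖x‖^4 ≤ 8 * K1 m ‖a‖ * ‖x‖^(α-4) := by
      calc 8 * K1 m ‖a‖/‖x‖^4 = (8 * K1 m ‖a‖) * (1/‖x‖^4) := by ring
        _ ≤ (8 * K1 m ‖a‖) * ‖x‖^(α-4) := mul_le_mul_of_nonneg_left hrp (by positivity)
    linarith
  exact hfin
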